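/- Let (c(t))_{t∈ℝ} be a complex-valued cosine function such that limsup_{t→0} |c(t) − 1| = 0. Then c is continuous on ℝ and there exists a ∈ ℂ such that c(t) = cos(t a) for all t ∈ ℝ. -/

import Mathlib

open Filter Topology
open scoped ENNReal NNReal

/-- A complex-valued cosine function: `c 0 = 1` and
`c (s+t) + c (s-t) = 2 * c s * c t` for all real `s, t`. -/
def IsScalarCosineFunction (c : ℝ → ℂ) : Prop :=
  c 0 = 1 ∧ ∀ s t : ℝ, c (s + t) + c (s - t) = 2 * c s * c t

/-! Continuity at `0` spreads to every `s`: `c (s + t) - c s` and `c (s - t) - c s` are the roots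
of a quadratic whose coefficients `2 c s (c t - 1)` and `(1 - c t) (2 c s ^ 2 - c t - 1)` tend to
`0` with `t`. By the open mapping theorem, values of `c` near `1` are cosines of small numbers.
Writing `c (2⁻ᴷ) = cos b` with `b` small and halving through `c (2 t) = 2 c t ^ 2 - 1`, smallness
fixes the half-angle at each step, as `cos v = cos w` forces `v ≡ ±w` modulo `2π`; so
`c (2⁻ᵏ) = cos (2⁻ᵏ a)` with `a = 2ᴷ b` for all `k ≥ K`. The three-term recursion
`c ((n + 1) x) = 2 c x c (n x) - c ((n - 1) x)` propagates this to all dyadic rationals, and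
continuity to all of `ℝ`. -/

theorem tendsto_of_limsup_nnnorm_sub_eq_zero {α E : Type*} [SeminormedAddCommGroup E]
    {l : Filter α} {f : α → E} {y : E} (h : limsup (fun x => (‖f x - y‖₊ : ℝ≥0∞)) l = 0) :
    Tendsto f l (𝓝 y) := by
  have : Tendsto (fun x => (‖f x - y‖₊ : ℝ≥0∞)) l (𝓝 0) :=
    tendsto_of_le_liminf_of_limsup_le bot_le h.le
  rw [← ENNReal.coe_zero, ENNReal.tendsto_coe] at this
  exact tendsto_iff_norm_sub_tendsto_zero.2 (NNReal.tendsto_coe.2 this)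

theorem norm_le_norm_add_add_sqrt_norm_mul {𝕜 : Type*} [NormedDivisionRing 𝕜] (u v : 𝕜) :
    ‖u‖ ≤ ‖u + v‖ + √‖u * v‖ := by
  have hsq : ‖u‖ ^ 2 ≤ ‖u‖ * ‖u + v‖ + ‖u * v‖ := calc
    ‖u‖ ^ 2 = ‖u * (u + v) - u * v‖ := by rw [mul_add, add_sub_cancel_right, norm_mul, sq]
    _ ≤ ‖u * (u + v)‖ + ‖u * v‖ := norm_sub_le _ _
    _ = ‖u‖ * ‖u + v‖ + ‖u * v‖ := by rw [norm_mul]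
  nlinarith [norm_nonneg (u + v), Real.sqrt_nonneg ‖u * v‖, Real.sq_sqrt (norm_nonneg (u * v)),
    sq_nonneg (‖u‖ - √‖u * v‖)]

theorem tendsto_zero_of_tendsto_add_of_tendsto_mul {α 𝕜 : Type*} [NormedDivisionRing 𝕜]
    {l : Filter α} {u v : α → 𝕜} (hadd : Tendsto (fun x => u x + v x) l (𝓝 0))
    (hmul : Tendsto (fun x => u x * v x) l (𝓝 0)) : Tendsto u l (𝓝 0) := by
  rw [tendsto_zero_iff_norm_tendsto_zero] at hadd hmul ⊢
  have hbound : Tendsto (fun x => ‖u x + v x‖ + √‖u x * v x‖) l (𝓝 0) := by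
    simpa using hadd.add hmul.sqrt
  exact squeeze_zero (fun _ => norm_nonneg _)
    (fun x => norm_le_norm_add_add_sqrt_norm_mul (u x) (v x)) hbound

theorem isScalarCosineFunction_cos_mul (a : ℂ) :
    IsScalarCosineFunction fun t : ℝ => Complex.cos (t * a) := by
  refine ⟨by simp, fun s t => ?_⟩
  push_cast
  rw [add_mul, sub_mul, Complex.cos_add, Complex.cos_sub]
  ring

theorem Complex.cos_eq_cos_of_cos_two_mul_eq {v w : ℂ}
    (h : Complex.cos (2 * v) = Complex.cos (2 * w)) (hvw : ‖v‖ + ‖w‖ < Real.pi) :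
    Complex.cos v = Complex.cos w := by
  have hshift : ∀ (k : ℤ) (u : ℂ), ‖u‖ = ‖v‖ → w = k * Real.pi + u → w = u := by
    intro k u hu hw
    have hk : |(k : ℝ)| * Real.pi < 1 * Real.pi := calc
      |(k : ℝ)| * Real.pi = ‖w - u‖ := by
        rw [hw, add_sub_cancel_right, norm_mul, Complex.norm_intCast, Complex.norm_real,
          Real.norm_of_nonneg Real.pi_pos.le]
      _ ≤ ‖w‖ + ‖u‖ := norm_sub_le _ _
      _ < 1 * Real.pi := by linarith
    have hk0 : k = 0 :=
      Int.abs_lt_one_iff.1 (by exact_mod_cast lt_of_mul_lt_mul_right hk Real.pi_pos.le)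
    simpa [hk0] using hw
  obtain ⟨k, hk | hk⟩ := Complex.cos_eq_cos_iff.1 h
  · rw [hshift k v rfl (by linear_combination hk / 2)]
  · rw [hshift k (-v) (norm_neg v) (by linear_combination hk / 2), Complex.cos_neg]

theorem dense_setOf_int_div_two_pow (K : ℕ) :
    Dense {x : ℝ | ∃ n : ℤ, ∃ k ≥ K, x = n / 2 ^ k} := by
  refine dense_of_exists_between fun x y hxy => ?_
  obtain ⟨k, hk⟩ := pow_unbounded_of_one_lt (y - x)⁻¹ one_lt_two
  set m := max k K
  have hpos : (0 : ℝ) < 2 ^ m := by positivity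
  have hm : 1 < (y - x) * 2 ^ m := by
    rw [← inv_mul_lt_iff₀ (sub_pos.2 hxy), mul_one]
    exact hk.trans_le (pow_le_pow_right₀ one_le_two (le_max_left k K))
  refine ⟨(⌊x * 2 ^ m⌋ + 1 : ℤ) / 2 ^ m, ⟨_, m, le_max_right _ _, rfl⟩, ?_, ?_⟩
  · rw [lt_div_iff₀ hpos]; push_cast; exact Int.lt_floor_add_one _
  · rw [div_lt_iff₀ hpos]; push_cast
    linarith [Int.floor_le (x * 2 ^ m)]

theorem Complex.eventually_exists_cos_eq {ε : ℝ} (hε : 0 < ε) :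
    ∀ᶠ z in 𝓝 1, ∃ w, ‖w‖ < ε ∧ Complex.cos w = z := by
  have hopen : 𝓝 (Complex.cos 0) ≤ map Complex.cos (𝓝 0) := by
    refine Complex.analyticAt_cos.eventually_constant_or_nhds_le_map_nhds.resolve_left
      fun hconst => ?_
    have := congrFun (AnalyticOnNhd.eq_of_eventuallyEq Complex.analyticOnNhd_cos
      analyticOnNhd_const hconst) Real.pi
    norm_num at this
  rw [Complex.cos_zero] at hopen
  filter_upwards [hopen (image_mem_map (Metric.ball_mem_nhds 0 hε))]
  rintro _ ⟨w, hw, rfl⟩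
  exact ⟨w, mem_ball_zero_iff.1 hw, rfl⟩

namespace IsScalarCosineFunction

variable {c d : ℝ → ℂ}

theorem map_neg (hc : IsScalarCosineFunction c) (t : ℝ) : c (-t) = c t := by
  have h := hc.2 0 t
  rw [zero_add, zero_sub, hc.1] at h
  linear_combination h

theorem map_two_mul (hc : IsScalarCosineFunction c) (t : ℝ) : c (2 * t) = 2 * c t ^ 2 - 1 := by
  have h := hc.2 t t
  rw [← two_mul, sub_self, hc.1] at h
  linear_combination h

theorem map_add_mul_map_sub (hc : IsScalarCosineFunction c) (s t : ℝ) :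
    c (s + t) * c (s - t) = c s ^ 2 + c t ^ 2 - 1 := by
  have h := hc.2 (s + t) (s - t)
  rw [show s + t + (s - t) = 2 * s by ring, show s + t - (s - t) = 2 * t by ring,
    hc.map_two_mul, hc.map_two_mul] at h
  linear_combination -h / 2

theorem map_nat_mul_eq (hc : IsScalarCosineFunction c) (hd : IsScalarCosineFunction d) {x : ℝ}
    (hx : c x = d x) (n : ℕ) : c (n * x) = d (n * x) := by
  induction n using Nat.twoStepInduction with
  | zero => simp [hc.1, hd.1]
  | one => simpa using hx
  | more n ih₀ ih₁ =>
    have hc' := hc.2 ((n + 1 : ℕ) * x) x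
    have hd' := hd.2 ((n + 1 : ℕ) * x) x
    rw [show ((n + 1 : ℕ) : ℝ) * x - x = n * x by push_cast; ring] at hc' hd'
    rw [show ((n + 2 : ℕ) : ℝ) * x = (n + 1 : ℕ) * x + x by push_cast; ring]
    linear_combination hc' - hd' - ih₀ + 2 * c x * ih₁ + 2 * d ((n + 1 : ℕ) * x) * hx

theorem map_int_mul_eq (hc : IsScalarCosineFunction c) (hd : IsScalarCosineFunction d) {x : ℝ}
    (hx : c x = d x) (n : ℤ) : c (n * x) = d (n * x) := by
  obtain ⟨m, rfl | rfl⟩ := Int.eq_nat_or_neg n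
  · exact_mod_cast hc.map_nat_mul_eq hd hx m
  · simpa [neg_mul, hc.map_neg, hd.map_neg] using hc.map_nat_mul_eq hd hx m

theorem continuous_of_tendsto_one (hc : IsScalarCosineFunction c) (h0 : Tendsto c (𝓝 0) (𝓝 1)) :
    Continuous c := by
  refine continuous_iff_continuousAt.2 fun s => ?_
  rw [ContinuousAt, ← map_add_left_nhds_zero, tendsto_map'_iff, tendsto_sub_nhds_zero_iff.symm]
  refine tendsto_zero_of_tendsto_add_of_tendsto_mul (v := fun t => c (s - t) - c s) ?_ ?_
  · have hsum : ∀ t, c (s + t) - c s + (c (s - t) - c s) = 2 * c s * (c t - 1) := fun t => by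
      linear_combination hc.2 s t
    simpa [hsum] using (h0.sub_const 1).const_mul (2 * c s)
  · have hprod : ∀ t, (c (s + t) - c s) * (c (s - t) - c s) =
        (1 - c t) * (2 * c s ^ 2 - c t - 1) := fun t => by
      linear_combination hc.map_add_mul_map_sub s t - c s * hc.2 s t
    simpa [hprod] using
      ((h0.const_sub 1).mul ((h0.const_sub (2 * c s ^ 2)).sub_const 1))

theorem exists_eq_cos_mul_one_div_two_pow (hc : IsScalarCosineFunction c)
    (h0 : Tendsto c (𝓝 0) (𝓝 1)) :
    ∃ a : ℂ, ∃ K : ℕ, ∀ k ≥ K, c (1 / 2 ^ k) = Complex.cos ((1 / 2 ^ k : ℝ) * a) := by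
  have hlim : Tendsto (fun k : ℕ => c (1 / 2 ^ k)) atTop (𝓝 1) := by
    simpa [Function.comp_def] using
      h0.comp (tendsto_pow_atTop_nhds_zero_of_lt_one (by norm_num : (0 : ℝ) ≤ 1 / 2) (by norm_num))
  obtain ⟨K, hK⟩ := eventually_atTop.1 <|
    hlim.eventually (Complex.eventually_exists_cos_eq (by positivity : 0 < Real.pi / 2))
  obtain ⟨b, hb, hbK⟩ := hK K le_rfl
  refine ⟨2 ^ K * b, K, fun k hk => ?_⟩
  induction k, hk using Nat.le_induction with
  | base => rw [← hbK]; push_cast; field_simp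
  | succ k hk ih =>
    obtain ⟨v, hv, hvk⟩ := hK (k + 1) (by omega)
    rw [← hvk]
    refine Complex.cos_eq_cos_of_cos_two_mul_eq ?_ ?_
    · have htwo : 2 * (1 / 2 ^ (k + 1) : ℝ) = 1 / 2 ^ k := by rw [pow_succ]; field_simp
      rw [Complex.cos_two_mul, hvk, ← hc.map_two_mul, htwo, ih]
      push_cast
      ring_nf
    · have hscale : ‖((1 / 2 ^ (k + 1) : ℝ) : ℂ) * (2 ^ K * b)‖ ≤ ‖b‖ := calc
          _ = 2 ^ K / 2 ^ (k + 1) * ‖b‖ := by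
            rw [norm_mul, norm_mul, norm_pow, Complex.norm_real, Complex.norm_two,
              Real.norm_of_nonneg (by positivity)]
            ring
          _ ≤ 1 * ‖b‖ := by
            gcongr
            exact div_le_one_of_le₀ (pow_le_pow_right₀ one_le_two (by omega)) (by positivity)
          _ = ‖b‖ := one_mul _
      linarith

theorem exists_eq_cos_mul (hc : IsScalarCosineFunction c) (h0 : Tendsto c (𝓝 0) (𝓝 1)) :
    ∃ a : ℂ, ∀ t : ℝ, c t = Complex.cos (t * a) := by
  obtain ⟨a, K, hK⟩ := hc.exists_eq_cos_mul_one_div_two_pow h0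
  refine ⟨a, congrFun <| Continuous.ext_on (dense_setOf_int_div_two_pow K)
    (hc.continuous_of_tendsto_one h0) (by fun_prop) ?_⟩
  rintro _ ⟨n, k, hk, rfl⟩
  rw [div_eq_mul_one_div]
  exact hc.map_int_mul_eq (isScalarCosineFunction_cos_mul a) (hK k hk) n

end IsScalarCosineFunction

/-- A scalar cosine function with `limsup_{t→0} |c(t) - 1| = 0` is continuous
and of the form `c(t) = cos (t a)` for some complex `a`. -/
theorem scalar_cosine_continuous (c : ℝ → ℂ) (hc : IsScalarCosineFunction c)
    (h : Filter.limsup (fun t : ℝ => (‖c t - 1‖₊ : ℝ≥0∞)) (𝓝[≠] 0) = 0) :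
    Continuous c ∧ ∃ a : ℂ, ∀ t : ℝ, c t = Complex.cos (t * a) := by
  have h0 : Tendsto c (𝓝 0) (𝓝 1) := by
    have h0' : Tendsto c (𝓝[≠] 0) (𝓝 (c 0)) := hc.1 ▸ tendsto_of_limsup_nnnorm_sub_eq_zero h
    simpa [hc.1] using (continuousWithinAt_compl_self.1 h0').tendsto
  exact ⟨hc.continuous_of_tendsto_one h0, hc.exists_eq_cos_mul h0⟩
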